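/- Fix an integer k ≥ 1. There exists a constant d_k > 0 such that for all integers 1 ≤ N ≤ M (M possibly ∞) and every n ∈ ℤ∖{0}: Σ_{n₁+⋯+n_k = n, 1 ≤ |n_j| ≤ M, max_j |n_j| > N} ∏_{j=1}^k (1/n_j²) ≤ d_k / max(N, |n|)². -/

import Mathlib

/-!
If `v` sums to `n` and some `|v j|` exceeds `N`, a largest coordinate `v i` satisfies
`max N |n| ≤ k |v i|`, so `∏ⱼ 1/vⱼ² ≤ k² / max(N, |n|)² · ∏_{j ≠ i} 1/vⱼ²`. Because the sum is
fixed, the coordinates other than `i` determine `v`, so summing the right-hand side over `v` is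
bounded by `(∑_{m ∈ ℤ} 1/m²)^(k-1)`; the `k` possible positions of `i` give the last factor `k`.
-/

open Finset

section

variable {ι : Type*} [Fintype ι]

theorem sum_prod_le_tsum_pow {α : Type*} {f : α → ℝ} (hf : ∀ a, 0 ≤ f a) (hfs : Summable f)
    (U : Finset (ι → α)) :
    ∑ u ∈ U, ∏ j, f (u j) ≤ (∑' a, f a) ^ Fintype.card ι := by
  classical
  let A : ι → Finset α := fun j => U.image (· j)
  calc ∑ u ∈ U, ∏ j, f (u j)
      ≤ ∑ u ∈ Fintype.piFinset A, ∏ j, f (u j) :=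
        sum_le_sum_of_subset_of_nonneg
          (fun u hu => Fintype.mem_piFinset.2 fun j => mem_image_of_mem _ hu)
          (fun u _ _ => prod_nonneg fun j _ => hf (u j))
    _ = ∏ j, ∑ a ∈ A j, f a := (prod_univ_sum A fun _ => f).symm
    _ ≤ ∏ _j : ι, ∑' a, f a :=
        prod_le_prod (fun j _ => sum_nonneg fun a _ => hf a)
          (fun j _ => hfs.sum_le_tsum _ fun a _ => hf a)
    _ = (∑' a, f a) ^ Fintype.card ι := by rw [prod_const, card_univ]

theorem sum_prod_erase_le_tsum_pow [DecidableEq ι] {G : Type*} [AddCommGroup G] {f : G → ℝ}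
    (hf : ∀ g, 0 ≤ f g) (hfs : Summable f) {n : G} (s : Finset (ι → G))
    (hs : ∀ v ∈ s, ∑ j, v j = n) (i : ι) :
    ∑ v ∈ s, ∏ j ∈ univ.erase i, f (v j) ≤ (∑' g, f g) ^ (Fintype.card ι - 1) := by
  classical
  let r : (ι → G) → (univ.erase i → G) := fun v j => v j
  have hr : Set.InjOn r s := by
    intro v hv w hw hvw
    have hoff : ∀ j ∈ univ.erase i, v j = w j := fun j hj => congrFun hvw ⟨j, hj⟩
    have hsum := (hs v hv).trans (hs w hw).symm
    rw [← add_sum_erase _ _ (mem_univ i), ← add_sum_erase _ w (mem_univ i),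
      sum_congr rfl hoff] at hsum
    funext j
    by_cases hj : j = i
    · subst hj; exact add_right_cancel hsum
    · exact hoff j (mem_erase.2 ⟨hj, mem_univ j⟩)
  calc ∑ v ∈ s, ∏ j ∈ univ.erase i, f (v j)
      = ∑ v ∈ s, ∏ j, f (r v j) := sum_congr rfl fun v _ => (prod_coe_sort _ _).symm
    _ = ∑ u ∈ s.image r, ∏ j, f (u j) := (sum_image (f := fun u => ∏ j, f (u j)) hr).symm
    _ ≤ (∑' g, f g) ^ Fintype.card (univ.erase i) := sum_prod_le_tsum_pow hf hfs _
    _ = (∑' g, f g) ^ (Fintype.card ι - 1) := by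
        rw [Fintype.card_coe, card_erase_of_mem (mem_univ i), card_univ]

theorem max_le_card_mul_abs_of_forall_abs_le {x : ι → ℝ} {i : ι} {a : ℝ}
    (hmax : ∀ j, |x j| ≤ |x i|) (ha : a ≤ |x i|) :
    max a |∑ j, x j| ≤ Fintype.card ι * |x i| := by
  have hcard : (1 : ℝ) ≤ Fintype.card ι := by exact_mod_cast Fintype.card_pos_iff.2 ⟨i⟩
  refine max_le (ha.trans (le_mul_of_one_le_left (abs_nonneg _) hcard)) ?_
  calc |∑ j, x j| ≤ ∑ j, |x j| := abs_sum_le_sum_abs _ _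
    _ ≤ ∑ _j : ι, |x i| := sum_le_sum fun j _ => hmax j
    _ = Fintype.card ι * |x i| := by rw [sum_const, card_univ, nsmul_eq_mul]

theorem one_div_sq_le_of_forall_abs_le {x : ι → ℝ} {i : ι} {a : ℝ}
    (hmax : ∀ j, |x j| ≤ |x i|) (ha : a ≤ |x i|) (hT : 0 < max a |∑ j, x j|) :
    1 / x i ^ 2 ≤ (Fintype.card ι : ℝ) ^ 2 / max a |∑ j, x j| ^ 2 := by
  have hle := max_le_card_mul_abs_of_forall_abs_le hmax ha
  have hxi : 0 < |x i| := pos_of_mul_pos_right (hT.trans_le hle) (Nat.cast_nonneg _)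
  rw [← sq_abs (x i), div_le_div_iff₀ (pow_pos hxi 2) (pow_pos hT 2), one_mul, ← mul_pow]
  exact pow_le_pow_left₀ hT.le hle 2

theorem prod_one_div_sq_le_mul_sum_prod_erase [DecidableEq ι] {x : ι → ℝ} {a : ℝ}
    (hx : ∃ j, a < |x j|) (hT : 0 < max a |∑ j, x j|) :
    ∏ j, 1 / x j ^ 2 ≤ (Fintype.card ι : ℝ) ^ 2 / max a |∑ j, x j| ^ 2 *
      ∑ i, ∏ j ∈ univ.erase i, 1 / x j ^ 2 := by
  obtain ⟨j₀, hj₀⟩ := hx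
  have : Nonempty ι := ⟨j₀⟩
  obtain ⟨i, hi⟩ := Finite.exists_max fun j => |x j|
  rw [← mul_prod_erase univ _ (mem_univ i)]
  exact mul_le_mul (one_div_sq_le_of_forall_abs_le hi (hj₀.le.trans (hi j₀)) hT)
    (single_le_sum (f := fun i => ∏ j ∈ univ.erase i, 1 / x j ^ 2)
      (fun _ _ => by positivity) (mem_univ i))
    (by positivity) (by positivity)

theorem sum_prod_one_div_sq_le [DecidableEq ι] {s : Finset (ι → ℤ)} {n : ℤ} {a : ℝ}
    (hs : ∀ v ∈ s, ∑ j, v j = n ∧ ∃ j, a < |(v j : ℝ)|) (hT : 0 < max a |(n : ℝ)|) :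
    ∑ v ∈ s, ∏ j, 1 / (v j : ℝ) ^ 2 ≤
      (Fintype.card ι : ℝ) ^ 3 * (∑' m : ℤ, 1 / (m : ℝ) ^ 2) ^ (Fintype.card ι - 1) /
        max a |(n : ℝ)| ^ 2 := by
  have hcast : ∀ v ∈ s, ∑ j, (v j : ℝ) = n := fun v hv => by exact_mod_cast (hs v hv).1
  calc ∑ v ∈ s, ∏ j, 1 / (v j : ℝ) ^ 2
      ≤ ∑ v ∈ s, (Fintype.card ι : ℝ) ^ 2 / max a |(n : ℝ)| ^ 2 *
          ∑ i, ∏ j ∈ univ.erase i, 1 / (v j : ℝ) ^ 2 := by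
        refine sum_le_sum fun v hv => ?_
        rw [← hcast v hv] at hT ⊢
        exact prod_one_div_sq_le_mul_sum_prod_erase (hs v hv).2 hT
    _ = (Fintype.card ι : ℝ) ^ 2 / max a |(n : ℝ)| ^ 2 *
          ∑ i, ∑ v ∈ s, ∏ j ∈ univ.erase i, 1 / (v j : ℝ) ^ 2 := by
        rw [← mul_sum, sum_comm]
    _ ≤ (Fintype.card ι : ℝ) ^ 2 / max a |(n : ℝ)| ^ 2 *
          ∑ _i : ι, (∑' m : ℤ, 1 / (m : ℝ) ^ 2) ^ (Fintype.card ι - 1) := by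
        gcongr with i
        exact sum_prod_erase_le_tsum_pow (fun m => by positivity)
          (Real.summable_one_div_int_pow.2 one_lt_two) s (fun v hv => (hs v hv).1) i
    _ = _ := by
        rw [sum_const, card_univ, nsmul_eq_mul]
        ring

end

theorem convolution_tail_sum_bound_general (k : ℕ) :
    ∃ d : ℝ, 0 < d ∧ ∀ (N : ℕ), 1 ≤ N → ∀ M : ℕ∞, (N : ℕ∞) ≤ M → ∀ (n : ℤ), n ≠ 0 →
      (∑' v : {v : Fin k → ℤ //
          (∑ j, v j) = n ∧ (∀ j, v j ≠ 0 ∧ ((v j).natAbs : ℕ∞) ≤ M) ∧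
            ∃ j, N < (v j).natAbs},
        ∏ j, (1 : ℝ) / ((v : Fin k → ℤ) j : ℝ) ^ 2)
        ≤ d / max (N : ℝ) |(n : ℝ)| ^ 2 := by
  set C := (k : ℝ) ^ 3 * (∑' m : ℤ, 1 / (m : ℝ) ^ 2) ^ (k - 1)
  -- `C` vanishes when `k = 0`.
  refine ⟨C + 1, by positivity, fun N hN M _ n _ => ?_⟩
  have hT : 0 < max (N : ℝ) |(n : ℝ)| := lt_max_of_lt_left (by exact_mod_cast hN)
  refine tsum_le_of_sum_le' (by positivity) fun s => ?_
  have hs : ∀ v ∈ s.map (Function.Embedding.subtype _),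
      ∑ j, v j = n ∧ ∃ j, (N : ℝ) < |(v j : ℝ)| := by
    intro v hv
    obtain ⟨⟨v, hsum, -, j, hj⟩, -, rfl⟩ := mem_map.1 hv
    exact ⟨hsum, j, by rw [← Int.cast_abs, ← Int.natCast_natAbs]; exact_mod_cast hj⟩
  have hbound := sum_prod_one_div_sq_le hs hT
  rw [sum_map, Fintype.card_fin] at hbound
  calc _ ≤ C / max (N : ℝ) |(n : ℝ)| ^ 2 := hbound
    _ ≤ (C + 1) / max (N : ℝ) |(n : ℝ)| ^ 2 := by gcongr; linarith

/-- Tail convolution bound: for `k ≥ 1` there is `d_k > 0` such that for all `1 ≤ N ≤ M ≤ ∞`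
and every nonzero `n`,
`Σ_{n₁+⋯+n_k = n, 1 ≤ |n_j| ≤ M, max_j |n_j| > N} ∏_j 1/n_j² ≤ d_k / max(N,|n|)²`. -/
theorem convolution_tail_sum_bound (k : ℕ) (hk : 1 ≤ k) :
    ∃ d : ℝ, 0 < d ∧ ∀ (N : ℕ), 1 ≤ N → ∀ M : ℕ∞, (N : ℕ∞) ≤ M → ∀ (n : ℤ), n ≠ 0 →
      (∑' v : {v : Fin k → ℤ //
          (∑ j, v j) = n ∧ (∀ j, v j ≠ 0 ∧ ((v j).natAbs : ℕ∞) ≤ M) ∧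
            ∃ j, N < (v j).natAbs},
        ∏ j, (1 : ℝ) / ((v : Fin k → ℤ) j : ℝ) ^ 2)
        ≤ d / max (N : ℝ) |(n : ℝ)| ^ 2 :=
  convolution_tail_sum_bound_general k
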